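/- arXiv:2107.06121 — 4 statements merged into one kernel-verified Lean document; each statement's English description precedes it below -/
import Mathlib

section
/- (Lemma 3.1(a), Bernstein–Goodman) A hypergraph H is acyclic if and only if the weight w(H) of H is equal to the weight of a maximum-weight spanning forest of the weighted hyperedge graph wg(H). -/
/-!
A hypergraph on a finite vertex type `V` is given by its finite set `E` of hyperedges.

For a subgraph `F` of `wg E`, the weight `|e ∩ f|` of an edge counts the vertices `v ∈ e ∩ f`, so
`fweight F` is the sum over `v` of the number of edges of `F` inside the star of `v` (the `deg v`
hyperedges containing `v`). When `F` is a forest, its restriction to a star is a forest on `deg v`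
nodes, so it has at most `deg v - 1` edges, with equality exactly when it is connected. Hence every
spanning forest weighs at most `w(H)`, with equality iff it connects every star within the star;
by uniqueness of paths in a forest, that is the join-forest property. Conversely a join forest `J`
connects every star within `J ⊓ wg E`, which is therefore a spanning forest of weight `w(H)`.
-/

variable {V : Type*} [Fintype V] [DecidableEq V]

def hdeg (E : Finset (Finset V)) (v : V) : ℕ := (E.filter (fun e => v ∈ e)).card

def hweight (E : Finset (Finset V)) : ℕ :=
  ∑ v ∈ Finset.univ.filter (fun v => 1 ≤ hdeg E v), (hdeg E v - 1)

/-- The weight `|e ∩ f|` of an edge is carried separately, by `interWt` in `fweight`. -/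
def wg (E : Finset (Finset V)) : SimpleGraph (Finset V) where
  Adj e f := e ∈ E ∧ f ∈ E ∧ e ≠ f ∧ (e ∩ f).Nonempty
  symm := ⟨fun e f ⟨he, hf, hne, hi⟩ => ⟨hf, he, hne.symm, by rwa [Finset.inter_comm] at hi⟩⟩
  loopless := ⟨fun e h => h.2.2.1 rfl⟩

def interWt : Sym2 (Finset V) → ℕ :=
  Sym2.lift ⟨fun a b => (a ∩ b).card, fun a b => by simp [Finset.inter_comm]⟩

noncomputable def fweight (F : SimpleGraph (Finset V)) : ℕ :=
  ∑ p ∈ (Set.toFinite F.edgeSet).toFinset, interWt p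

def IsSpanningForest (G S : SimpleGraph (Finset V)) : Prop :=
  S ≤ G ∧ S.IsAcyclic ∧ ∀ a b, S.Reachable a b ↔ G.Reachable a b

def IsMaxSpanningForest (G S : SimpleGraph (Finset V)) : Prop :=
  IsSpanningForest G S ∧ ∀ S', IsSpanningForest G S' → fweight S' ≤ fweight S

def IsForestOn (E : Finset (Finset V)) (F : SimpleGraph (Finset V)) : Prop :=
  F.IsAcyclic ∧ ∀ e f, F.Adj e f → e ∈ E ∧ f ∈ E

def IsJoinForest (E : Finset (Finset V)) (J : SimpleGraph (Finset V)) : Prop :=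
  IsForestOn E J ∧
  ∀ e ∈ E, ∀ f ∈ E, ∀ v ∈ e, v ∈ f →
    J.Reachable e f ∧ ∀ p : J.Walk e f, p.IsPath → ∀ g ∈ p.support, v ∈ g

def IsAcyclicHypergraph (E : Finset (Finset V)) : Prop := ∃ J, IsJoinForest E J

namespace SimpleGraph

variable {U : Type*} {G : SimpleGraph U}

lemma IsAcyclic.exists_isTree_ge [Nonempty U] (hG : G.IsAcyclic) : ∃ T, G ≤ T ∧ T.IsTree := by
  obtain ⟨T, hGT, -, hT⟩ := connected_top.exists_isTree_le_of_le_of_isAcyclic le_top hG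
  exact ⟨T, hGT, hT⟩

lemma IsAcyclic.card_edgeSet_le [Finite U] (hG : G.IsAcyclic) :
    Nat.card G.edgeSet ≤ Nat.card U - 1 := by
  cases isEmpty_or_nonempty U
  · simp
  obtain ⟨T, hGT, hT⟩ := hG.exists_isTree_ge
  have hT_card := (isTree_iff_connected_and_card.1 hT).2
  have hle : Nat.card G.edgeSet ≤ Nat.card T.edgeSet := by
    simpa only [Nat.card_coe_set_eq] using Set.ncard_le_ncard (edgeSet_mono hGT)
  omega

/-- With that many edges, `G` must equal the spanning tree `exists_isTree_ge` puts around it. -/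
lemma IsAcyclic.card_edgeSet_eq_iff_preconnected [Finite U] (hG : G.IsAcyclic) :
    Nat.card G.edgeSet = Nat.card U - 1 ↔ G.Preconnected := by
  cases isEmpty_or_nonempty U
  · exact iff_of_true (by simp) fun u => isEmptyElim u
  constructor
  · intro h
    obtain ⟨T, hGT, hT⟩ := hG.exists_isTree_ge
    have hT_card := (isTree_iff_connected_and_card.1 hT).2
    have hGT_eq : G = T := edgeSet_injective <| Set.eq_of_subset_of_ncard_le (edgeSet_mono hGT)
      (by simp only [← Nat.card_coe_set_eq]; omega)
    exact hGT_eq ▸ hT.connected.preconnected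
  · intro h
    have hG_card := (isTree_iff_connected_and_card.1 ⟨Connected.mk h, hG⟩).2
    omega

lemma Walk.mem_of_mem_support_of_support_subset {s : Set U} (hs : G.support ⊆ s) {a b : U}
    (p : G.Walk a b) (hb : b ∈ s) : ∀ x ∈ p.support, x ∈ s := by
  intro x hx
  obtain rfl | ⟨e, he, hxe⟩ := mem_support_iff_exists_mem_edges.1 hx
  · exact hb
  obtain ⟨y, rfl⟩ := Sym2.mem_iff_exists.1 hxe
  exact hs ⟨y, p.edges_subset_edgeSet he⟩

lemma Preconnected.exists_walk_of_induce {s : Set U} (h : (G.induce s).Preconnected) {a b : U}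
    (ha : a ∈ s) (hb : b ∈ s) : ∃ p : G.Walk a b, ∀ x ∈ p.support, x ∈ s := by
  obtain ⟨p⟩ := h ⟨a, ha⟩ ⟨b, hb⟩
  refine ⟨p.map (Embedding.induce s).toHom, fun x hx => ?_⟩
  obtain ⟨y, -, rfl⟩ := List.mem_map.1 ((p.support_map _).subst hx : x ∈ _)
  exact y.2

end SimpleGraph

open Finset SimpleGraph

def hstar (E : Finset (Finset V)) (v : V) : Finset (Finset V) := E.filter (fun e => v ∈ e)

abbrev starGraph (F : SimpleGraph (Finset V)) (E : Finset (Finset V)) (v : V) :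
    SimpleGraph (hstar E v : Set (Finset V)) :=
  F.induce (hstar E v : Set (Finset V))

variable {E : Finset (Finset V)} {F : SimpleGraph (Finset V)}

omit [Fintype V] in
@[simp]
lemma mem_hstar {e : Finset V} {v : V} : e ∈ hstar E v ↔ e ∈ E ∧ v ∈ e := mem_filter

omit [Fintype V] in
lemma card_hstar (v : V) : Nat.card (hstar E v : Set (Finset V)) = hdeg E v := by
  rw [Nat.card_coe_set_eq, Set.ncard_coe_finset, hstar, hdeg]

/-- Isolated vertices contribute `0 - 1 = 0` to the sum. -/
lemma hweight_eq_sum_hdeg_sub_one : hweight E = ∑ v, (hdeg E v - 1) :=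
  sum_filter_of_ne fun _ _ h => by omega

omit [Fintype V] in
lemma image_edgeSet_starGraph (hF : F ≤ wg E) (v : V) :
    Sym2.map Subtype.val '' (starGraph F E v).edgeSet = {p ∈ F.edgeSet | ∀ e ∈ p, v ∈ e} := by
  ext p
  induction p using Sym2.ind with
  | _ a b =>
    simp only [Set.mem_image, Sym2.exists, mem_edgeSet, comap_adj, Function.Embedding.subtype_apply,
      Sym2.map_mk, Sym2.eq, Sym2.rel_iff', Prod.mk.injEq, Prod.swap_prod_mk, Subtype.exists,
      mem_coe, mem_hstar, exists_and_left, exists_prop, Set.mem_ofPred_eq, Sym2.mem_iff,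
      forall_eq_or_imp, forall_eq]
    constructor
    · rintro ⟨x, ⟨-, hvx⟩, y, hxy, ⟨-, hvy⟩, ⟨rfl, rfl⟩ | ⟨rfl, rfl⟩⟩
      · exact ⟨hxy, hvx, hvy⟩
      · exact ⟨hxy.symm, hvy, hvx⟩
    · rintro ⟨hab, hva, hvb⟩
      exact ⟨a, ⟨(hF hab).1, hva⟩, b, hab, ⟨(hF hab).2.1, hvb⟩, .inl ⟨rfl, rfl⟩⟩

/-- Double counting of the pairs (edge `s(e, f)` of `F`, vertex of `e ∩ f`). -/
lemma fweight_eq_sum_card_edgeSet_starGraph (hF : F ≤ wg E) :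
    fweight F = ∑ v, Nat.card (starGraph F E v).edgeSet := by
  classical
  have hinter : ∀ p : Sym2 (Finset V), interWt p = #{v | ∀ e ∈ p, v ∈ e} := by
    intro p
    induction p using Sym2.ind with
    | _ a b =>
      change #(a ∩ b) = _
      congr 1
      ext v
      simp
  have hcard : ∀ v, Nat.card (starGraph F E v).edgeSet = #{p ∈ F.edgeFinset | ∀ e ∈ p, v ∈ e} := by
    intro v
    rw [← Nat.card_image_of_injective (Sym2.map.injective Subtype.val_injective),
      image_edgeSet_starGraph hF, ← coe_edgeFinset, Nat.card_coe_set_eq, ← Set.ncard_coe_finset,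
      coe_filter]
    rfl
  rw [fweight, Set.Finite.toFinset_eq_toFinset, ← edgeFinset]
  simp only [hinter, card_filter, hcard]
  exact sum_comm

lemma card_edgeSet_starGraph_le (hF : F.IsAcyclic) (v : V) :
    Nat.card (starGraph F E v).edgeSet ≤ hdeg E v - 1 :=
  card_hstar (E := E) v ▸ (hF.induce _).card_edgeSet_le

lemma fweight_le_hweight (hFE : F ≤ wg E) (hF : F.IsAcyclic) : fweight F ≤ hweight E := by
  rw [fweight_eq_sum_card_edgeSet_starGraph hFE, hweight_eq_sum_hdeg_sub_one]
  exact sum_le_sum fun v _ => card_edgeSet_starGraph_le hF v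

lemma fweight_eq_hweight_iff (hFE : F ≤ wg E) (hF : F.IsAcyclic) :
    fweight F = hweight E ↔ ∀ v, (starGraph F E v).Preconnected := by
  rw [fweight_eq_sum_card_edgeSet_starGraph hFE, hweight_eq_sum_hdeg_sub_one,
    sum_eq_sum_iff_of_le fun v _ => card_edgeSet_starGraph_le hF v]
  refine forall_congr' fun v => ?_
  rw [← (hF.induce _).card_edgeSet_eq_iff_preconnected, card_hstar]
  simp

omit [Fintype V] in
lemma reachable_iff_of_preconnected_starGraph (hFE : F ≤ wg E)
    (hF : ∀ v, (starGraph F E v).Preconnected) (e f : Finset V) :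
    F.Reachable e f ↔ (wg E).Reachable e f := by
  refine ⟨fun h => h.mono hFE, fun h => ?_⟩
  rw [reachable_iff_reflTransGen] at h ⊢
  refine Relation.reflTransGen_closed (fun a b hab => ?_) e f h
  obtain ⟨ha, hb, -, v, hv⟩ := hab
  rw [mem_inter] at hv
  obtain ⟨p, -⟩ := (hF v).exists_walk_of_induce (mem_hstar.2 ⟨ha, hv.1⟩) (mem_hstar.2 ⟨hb, hv.2⟩)
  exact (reachable_iff_reflTransGen _ _).1 p.reachable

omit [Fintype V] in
lemma isJoinForest_of_preconnected_starGraph (hFE : F ≤ wg E) (hF : F.IsAcyclic)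
    (hconn : ∀ v, (starGraph F E v).Preconnected) : IsJoinForest E F := by
  refine ⟨⟨hF, fun e f h => ⟨(hFE h).1, (hFE h).2.1⟩⟩, fun e he f hf v hve hvf => ?_⟩
  obtain ⟨w, hw⟩ := (hconn v).exists_walk_of_induce (mem_hstar.2 ⟨he, hve⟩) (mem_hstar.2 ⟨hf, hvf⟩)
  refine ⟨w.reachable, fun p hp g hg => ?_⟩
  have hpw : p = w.toPath :=
    congrArg Subtype.val ((hF.subsingleton_path e f).elim ⟨p, hp⟩ w.toPath)
  subst hpw
  exact (mem_hstar.1 (hw g (w.support_toPath_subset_support hg))).2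

omit [Fintype V] in
lemma IsJoinForest.preconnected_starGraph {J : SimpleGraph (Finset V)} (hJ : IsJoinForest E J)
    (v : V) : (starGraph (J ⊓ wg E) E v).Preconnected := by
  have hstar_eq : starGraph (J ⊓ wg E) E v = starGraph J E v := by
    ext ⟨x, hx⟩ ⟨y, hy⟩
    rw [mem_coe, mem_hstar] at hx hy
    exact ⟨fun h => h.1, fun h => ⟨h, hx.1, hy.1, fun hxy => h.ne (Subtype.ext hxy), v,
      mem_inter.2 ⟨hx.2, hy.2⟩⟩⟩
  rw [hstar_eq]
  rintro ⟨e, he⟩ ⟨f, hf⟩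
  rw [mem_coe, mem_hstar] at he hf
  obtain ⟨⟨w⟩, hpath⟩ := hJ.2 e he.1 f hf.1 v he.2 hf.2
  have hsupp : ∀ g ∈ w.toPath.1.support, g ∈ (hstar E v : Set (Finset V)) := fun g hg =>
    mem_hstar.2 ⟨Walk.mem_of_mem_support_of_support_subset (fun x ⟨y, h⟩ => (hJ.1.2 x y h).1)
      _ hf.1 g hg, hpath _ w.toPath.2 g hg⟩
  exact (w.toPath.1.induce _ hsupp).reachable

/-- **Lemma 3.1(a)**: `H` is acyclic iff `w(H)` equals the weight of a
maximum-weight spanning forest of `wg(H)`. -/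
theorem acyclic_iff_maxSpanningForest_weight_eq (E : Finset (Finset V)) :
    IsAcyclicHypergraph E ↔
      ∃ S, IsMaxSpanningForest (wg E) S ∧ fweight S = hweight E := by
  constructor
  · rintro ⟨J, hJ⟩
    have hSE : J ⊓ wg E ≤ wg E := inf_le_right
    have hS : (J ⊓ wg E).IsAcyclic := hJ.1.1.anti inf_le_left
    have hweight_eq := (fweight_eq_hweight_iff hSE hS).2 hJ.preconnected_starGraph
    refine ⟨J ⊓ wg E, ⟨⟨hSE, hS, reachable_iff_of_preconnected_starGraph hSE
      hJ.preconnected_starGraph⟩, fun S' hS' => ?_⟩, hweight_eq⟩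
    exact hweight_eq ▸ fweight_le_hweight hS'.1 hS'.2.1
  · rintro ⟨S, ⟨⟨hSE, hS, -⟩, -⟩, hweight_eq⟩
    exact ⟨S, isJoinForest_of_preconnected_starGraph hSE hS
      ((fweight_eq_hweight_iff hSE hS).1 hweight_eq)⟩
end

section
/- For every hypergraph H and every forest F whose node set is the set of hyperedges of H, the weight of F is at most the weight w(H) of H. -/
/-!
Lemma 3.1(a) (Bernstein–Goodman): a hypergraph `H` is acyclic iff the weight `w(H)`
equals the weight of a maximum-weight spanning forest of the weighted hyperedge
graph `wg(H)`.

A hypergraph on a finite vertex type `V` is given by its finite set `E` of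
hyperedges, each a `Finset V`.
-/

variable {V : Type*} [Fintype V] [DecidableEq V]

/-!
Count the weight of `F` vertex by vertex: `v` contributes `1` to `|e ∩ e'|` exactly for the
edges `ee'` of `F` lying inside the star `{e ∈ E | v ∈ e}`. Those edges form an acyclic graph on
`deg(v)` nodes, so there are at most `deg(v) - 1` of them, which is `v`'s term in `w(H)`.
-/

open Finset SimpleGraph

namespace SimpleGraph

variable {α : Type*} [Fintype α] {G : SimpleGraph α}

theorem IsAcyclic.card_edgeFinset_le [Fintype G.edgeSet] (hG : G.IsAcyclic) :
    #G.edgeFinset ≤ Fintype.card α - 1 := by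
  cases isEmpty_or_nonempty α
  · simp [Subsingleton.elim G ⊥]
  obtain ⟨T, hGT, -, hT⟩ := connected_top.exists_isTree_le_of_le_of_isAcyclic le_top hG
  classical
  have hT_card := hT.card_edgeFinset
  have hGT_card : #G.edgeFinset ≤ #T.edgeFinset := card_le_card (edgeFinset_mono hGT)
  omega

theorem IsAcyclic.card_filter_edgeFinset_subset_le [DecidableEq α] [DecidableRel G.Adj]
    (hG : G.IsAcyclic) (s : Finset α) :
    #{e ∈ G.edgeFinset | e.toFinset ⊆ s} ≤ #s - 1 := by
  rw [card_filter_edgeFinset_toFinset_subset]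
  simpa using (hG.induce s).card_edgeFinset_le

end SimpleGraph

lemma interWt_eq_card (p : Sym2 (Finset V)) : interWt p = #{v | ∀ x ∈ p, v ∈ x} := by
  induction p using Sym2.ind with
  | _ a b => simp [interWt, filter_and]

lemma fweight_eq_sum_card (F : SimpleGraph (Finset V)) [DecidableRel F.Adj] :
    fweight F = ∑ v, #{p ∈ F.edgeFinset | ∀ x ∈ p, v ∈ x} := by
  have hedges : (Set.toFinite F.edgeSet).toFinset = F.edgeFinset := by ext; simp
  simp_rw [fweight, hedges, interWt_eq_card, card_filter]
  exact sum_comm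

lemma hweight_eq_sum (E : Finset (Finset V)) : hweight E = ∑ v, (hdeg E v - 1) := by
  refine sum_subset (filter_subset _ _) fun v _ hv => ?_
  simp only [mem_filter, mem_univ, true_and, not_le, Nat.lt_one_iff] at hv
  simp [hv]

lemma IsForestOn.card_filter_edgeFinset_le_hdeg_sub_one {E : Finset (Finset V)}
    {F : SimpleGraph (Finset V)} [DecidableRel F.Adj] (hF : IsForestOn E F) (v : V) :
    #{p ∈ F.edgeFinset | ∀ x ∈ p, v ∈ x} ≤ hdeg E v - 1 := by
  have hstar : {p ∈ F.edgeFinset | ∀ x ∈ p, v ∈ x}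
      = {p ∈ F.edgeFinset | p.toFinset ⊆ {e ∈ E | v ∈ e}} := by
    have hsupp : F.support ⊆ (E : Set (Finset V)) := fun e ⟨f, hef⟩ => (hF.2 e f hef).1
    refine filter_congr fun p hp => ?_
    have hpE := mem_sym2_iff.mp (edgeFinset_subset_sym2_of_support_subset hsupp hp)
    simp only [subset_iff, Sym2.mem_toFinset, mem_filter]
    exact forall₂_congr fun e he => (and_iff_right (by simpa using hpE e he)).symm
  rw [hstar]
  exact hF.1.card_filter_edgeFinset_subset_le _

/-- For every hypergraph `H` and every forest `F` whose node set is the set of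
hyperedges of `H`, the weight of `F` is at most the weight `w(H)` of `H`. -/
theorem forest_weight_le_hweight (E : Finset (Finset V)) (F : SimpleGraph (Finset V))
    (hF : IsForestOn E F) :
    fweight F ≤ hweight E := by
  classical
  rw [fweight_eq_sum_card, hweight_eq_sum]
  exact sum_le_sum fun v _ => hF.card_filter_edgeFinset_le_hdeg_sub_one v
end

section
/- Every hypergraph H has a maximum-weight spanning forest S of its weighted hyperedge graph wg(H) that satisfies Invariant (★); consequently, in such a forest S every node e has degree at most 2·(2^{|e|} − 1). -/
/-!
Lemma 3.1(a) (Bernstein–Goodman): a hypergraph `H` is acyclic iff the weight `w(H)`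
equals the weight of a maximum-weight spanning forest of the weighted hyperedge
graph `wg(H)`.

A hypergraph on a finite vertex type `V` is given by its finite set `E` of
hyperedges, each a `Finset V`.
-/

variable {V : Type*} [Fintype V] [DecidableEq V]

/-- Invariant (★): for every hyperedge `e` and every nonempty `A ⊆ e`, the forest
`S` has at most two edges `(e, f)` with `e ∩ f = A`. -/
def InvariantStar (E : Finset (Finset V)) (S : SimpleGraph (Finset V)) : Prop :=
  ∀ e ∈ E, ∀ A : Finset V, A.Nonempty → A ⊆ e →
    {f : Finset V | S.Adj e f ∧ e ∩ f = A}.ncard ≤ 2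

/-!
Among the maximum-weight spanning forests of `wg E` choose one, `S`, minimising the excess
`∑ (d_A(g) - 2)`, where `d_A(g)` counts the `S`-neighbours `h` of `g` with `g ∩ h = A`. Suppose
`d_A(e) ≥ 3`, and let `f₁ ≠ f` be two of these neighbours. Deleting the edge `e f` separates `e`
from `f`; on the side of `e` take the vertex `x ≠ e` with `A ⊆ x` farthest from `e`, so that at
most one neighbour of `x` contains `A`. Replacing `e f` by `x f` gives a spanning forest, so
maximality forces `|x ∩ f| ≤ |A|`, i.e. `x ∩ f = A` and the weight is unchanged. The exchange
lowers `d_A(e) ≥ 3` by one, raises `d_A(x) ≤ 1` by one, and leaves every other `d_B(g)` unchanged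
(`f` trades `e` for `x`), so the excess drops: a contradiction. The degree bound follows by
summing (★) over the `2 ^ |e| - 1` nonempty `A ⊆ e`.
-/

open SimpleGraph

namespace SimpleGraph

variable {α : Type*} {G H : SimpleGraph α}

lemma reachable_le_of_forall_adj (h : ∀ ⦃u v⦄, G.Adj u v → H.Reachable u v) :
    G.Reachable ≤ H.Reachable := by
  rw [reachable_eq_reflTransGen, reachable_eq_reflTransGen]
  exact Relation.reflTransGen_closed fun _ _ huv => (reachable_iff_reflTransGen _ _).1 (h huv)

lemma reachable_sup_edge_le {u v w : α} (h : G.Reachable u w) :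
    (G ⊔ edge u v).Reachable ≤ (G ⊔ edge w v).Reachable := by
  have hwv : (G ⊔ edge w v).Reachable w v := by
    rcases eq_or_ne w v with rfl | hne
    · rfl
    · exact Adj.reachable (Or.inr ((edge_adj ..).2 ⟨Or.inl ⟨rfl, rfl⟩, hne⟩))
  have huw : (G ⊔ edge w v).Reachable u w := h.mono le_sup_left
  refine reachable_le_of_forall_adj fun a b hab => ?_
  rcases hab with hab | hab
  · exact hab.reachable.mono le_sup_left
  · rcases ((edge_adj ..).1 hab).1 with ⟨rfl, rfl⟩ | ⟨rfl, rfl⟩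
    · exact huw.trans hwv
    · exact (huw.trans hwv).symm

lemma reachable_sup_edge_eq {u v w : α} (h : G.Reachable u w) :
    (G ⊔ edge u v).Reachable = (G ⊔ edge w v).Reachable :=
  le_antisymm (reachable_sup_edge_le h) (reachable_sup_edge_le h.symm)

lemma IsAcyclic.length_eq_dist (hG : G.IsAcyclic) {u v : α} {p : G.Walk u v} (hp : p.IsPath) :
    p.length = G.dist u v := by
  obtain ⟨q, hq, hlen⟩ := p.reachable.exists_path_of_dist
  obtain rfl : p = q := congrArg Subtype.val ((hG.subsingleton_path u v).elim ⟨p, hp⟩ ⟨q, hq⟩)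
  exact hlen

/-- Take `x` farthest from `e` among the vertices satisfying `Q`: each neighbour of `x` satisfying
`Q` lies on the path from `e` to `x`, hence is its penultimate vertex. -/
lemma IsAcyclic.exists_reachable_subsingleton_adj [Finite α] (hG : G.IsAcyclic) (Q : α → Prop)
    {e f : α} (hef : G.Adj e f) (hf : Q f) :
    ∃ x, Q x ∧ G.Reachable e x ∧ x ≠ e ∧ {z | G.Adj x z ∧ Q z}.Subsingleton := by
  obtain ⟨x, ⟨hQx, hex, hxe⟩, hmax⟩ := Set.exists_max_image
    {x | Q x ∧ G.Reachable e x ∧ x ≠ e} (G.dist e) (Set.toFinite _)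
    ⟨f, hf, hef.reachable, hef.ne'⟩
  obtain ⟨p, hp, hlen⟩ := hex.exists_path_of_dist
  have key : ∀ z, G.Adj x z → Q z → z = p.penultimate := by
    intro z hxz hQz
    refine hG.eq_penultimate_of_adj_end hp hxz (by_contra fun hz => ?_)
    have hle := hmax z ⟨hQz, hex.trans hxz.reachable, fun h => hz (h ▸ p.start_mem_support)⟩
    have hlen' := hG.length_eq_dist (hp.concat hz hxz)
    rw [Walk.length_concat, hlen] at hlen'
    omega
  exact ⟨x, hQx, hex, hxe, fun z₁ h₁ z₂ h₂ => (key z₁ h₁.1 h₁.2).trans (key z₂ h₂.1 h₂.2).symm⟩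

end SimpleGraph

section SpanningForest

variable {β : Type*}

lemma exists_isSpanningForest (G : SimpleGraph (Finset β)) : ∃ S, IsSpanningForest G S := by
  obtain ⟨S, hle, hS, hreach⟩ := G.exists_isAcyclic_reachable_eq_le
  exact ⟨S, hle, hS, fun a b => by rw [hreach]⟩

lemma IsSpanningForest.exchange {G S₀ : SimpleGraph (Finset β)} {e f x : Finset β}
    (hS : IsSpanningForest G (S₀ ⊔ edge e f)) (hef : ¬S₀.Reachable e f) (hex : S₀.Reachable e x)
    (hxf : G.Adj x f) : IsSpanningForest G (S₀ ⊔ edge x f) :=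
  ⟨sup_le (le_sup_left.trans hS.1) ((edge_le_iff _).2 (Or.inr hxf)),
    (hS.2.1.anti le_sup_left).sup_edge_of_not_reachable fun h => hef (hex.trans h),
    by rw [← reachable_sup_edge_eq hex]; exact hS.2.2⟩

end SpanningForest

lemma exists_isMaxSpanningForest (G : SimpleGraph (Finset V)) : ∃ S, IsMaxSpanningForest G S := by
  obtain ⟨S, hS, hmax⟩ := Set.exists_max_image {S | IsSpanningForest G S} fweight (Set.toFinite _)
    (exists_isSpanningForest G)
  exact ⟨S, hS, hmax⟩

lemma fweight_sup_edge {S : SimpleGraph (Finset V)} {u v : Finset V} (huv : ¬S.Adj u v)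
    (hne : u ≠ v) : fweight (S ⊔ edge u v) = fweight S + (u ∩ v).card := by
  have hE : (Set.toFinite (S ⊔ edge u v).edgeSet).toFinset
      = insert s(u, v) (Set.toFinite S.edgeSet).toFinset := by
    ext; simp [edgeSet_sup, edgeSet_edge_of_ne hne]
  rw [fweight, hE, Finset.sum_insert (by simpa using huv), add_comm]
  rfl

noncomputable def interDegree (S : SimpleGraph (Finset V)) (g A : Finset V) : ℕ :=
  {h | S.Adj g h ∧ g ∩ h = A}.ncard

lemma interDegree_sup_edge {S : SimpleGraph (Finset V)} {u v : Finset V} (huv : ¬S.Adj u v)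
    (hne : u ≠ v) (g B : Finset V) :
    interDegree (S ⊔ edge u v) g B
      = interDegree S g B + if B = u ∩ v ∧ (g = u ∨ g = v) then 1 else 0 := by
  have hsplit : {h | (S ⊔ edge u v).Adj g h ∧ g ∩ h = B}
      = {h | S.Adj g h ∧ g ∩ h = B} ∪ {h | (edge u v).Adj g h ∧ g ∩ h = B} := by
    ext h
    simp only [sup_adj, Set.mem_ofPred_eq, Set.mem_union]
    tauto
  have hdisj : Disjoint {h | S.Adj g h ∧ g ∩ h = B} {h | (edge u v).Adj g h ∧ g ∩ h = B} := by
    refine Set.disjoint_left.2 fun h h₁ h₂ => huv ?_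
    rcases ((edge_adj ..).1 h₂.1).1 with ⟨rfl, rfl⟩ | ⟨rfl, rfl⟩
    · exact h₁.1
    · exact h₁.1.symm
  have hnew : {h | (edge u v).Adj g h ∧ g ∩ h = B}.ncard
      = if B = u ∩ v ∧ (g = u ∨ g = v) then 1 else 0 := by
    split_ifs with hB
    · obtain ⟨rfl, rfl | rfl⟩ := hB
      · exact Set.ncard_eq_one.2 ⟨v, by ext h; simp [edge_adj]; grind⟩
      · exact Set.ncard_eq_one.2 ⟨u, by ext h; simp [edge_adj]; grind [Finset.inter_comm]⟩
    · exact (Set.ncard_eq_zero).2 (by ext h; simp [edge_adj]; grind [Finset.inter_comm])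
  rw [interDegree, interDegree, hsplit, Set.ncard_union_eq hdisj, hnew]

noncomputable def excess (S : SimpleGraph (Finset V)) : ℕ :=
  ∑ g : Finset V, ∑ A : Finset V, (interDegree S g A - 2)

lemma excess_sup_edge_lt {S₀ : SimpleGraph (Finset V)} {e f x A : Finset V} (hef : ¬S₀.Adj e f)
    (hxf : ¬S₀.Adj x f) (he : e ≠ f) (hx : x ≠ f) (hxe : x ≠ e) (heA : e ∩ f = A)
    (hxA : x ∩ f = A) (he3 : 2 < interDegree (S₀ ⊔ edge e f) e A)
    (hx1 : interDegree S₀ x A ≤ 1) :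
    excess (S₀ ⊔ edge x f) < excess (S₀ ⊔ edge e f) := by
  have hS := interDegree_sup_edge hef he
  have hS' := interDegree_sup_edge hxf hx
  rw [heA] at hS
  rw [hxA] at hS'
  rw [hS] at he3
  simp only [true_and, true_or, if_true] at he3
  have hle : ∀ g B, interDegree (S₀ ⊔ edge x f) g B - 2 ≤ interDegree (S₀ ⊔ edge e f) g B - 2 := by
    intro g B
    rw [hS, hS']
    by_cases hg : g = x ∧ B = A
    · obtain ⟨rfl, rfl⟩ := hg
      simp only [true_and, true_or, if_true, hxe, hx, or_self, if_false]
      omega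
    · split_ifs <;> grind
  refine Finset.sum_lt_sum (fun g _ => Finset.sum_le_sum fun B _ => hle g B)
    ⟨e, Finset.mem_univ _, Finset.sum_lt_sum (fun B _ => hle e B) ⟨A, Finset.mem_univ _, ?_⟩⟩
  rw [hS, hS']
  simp only [true_and, true_or, if_true, hxe.symm, he, or_self, if_false]
  omega

lemma invariantStar_of_excess_le {E : Finset (Finset V)} {S : SimpleGraph (Finset V)}
    (hS : IsMaxSpanningForest (wg E) S)
    (hmin : ∀ S', IsMaxSpanningForest (wg E) S' → excess S ≤ excess S') : InvariantStar E S := by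
  intro e _ A hA _
  by_contra! he3
  obtain ⟨f₁, f, ⟨hf₁, hA₁⟩, ⟨hf, hAf⟩, hf₁f⟩ :=
    (Set.one_lt_ncard_iff (s := {f | S.Adj e f ∧ e ∩ f = A})).1 (by omega)
  obtain ⟨S₀, rfl, hbr⟩ : ∃ S₀, S = S₀ ⊔ edge e f ∧ ¬S₀.Reachable e f :=
    ⟨_, (sdiff_sup_cancel ((edge_le_iff _).2 (Or.inr hf))).symm,
      isAcyclic_iff_forall_adj_isBridge.1 hS.1.2.1 hf⟩
  have hS₀f₁ : S₀.Adj e f₁ := by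
    rcases hf₁ with h | h
    · exact h
    · exact absurd (((edge_adj ..).1 h).1.resolve_right (by grind)).2 hf₁f
  obtain ⟨x, hAx, hex, hxe, hx1⟩ := (hS.1.2.1.anti le_sup_left).exists_reachable_subsingleton_adj
    (A ⊆ ·) hS₀f₁ (hA₁ ▸ Finset.inter_subset_right)
  have hxf : x ≠ f := by rintro rfl; exact hbr hex
  have hAxf : A ⊆ x ∩ f := Finset.subset_inter hAx (hAf ▸ Finset.inter_subset_right)
  have hxE : x ∈ E := by
    obtain ⟨p⟩ := hex
    exact (hS.1.1 (le_sup_left (a := S₀) (p.adj_penultimate (Walk.not_nil_of_ne hxe.symm)))).2.1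
  have hwg : (wg E).Adj x f := ⟨hxE, (hS.1.1 hf).2.1, hxf, hA.mono hAxf⟩
  have hS' := hS.1.exchange hbr hex hwg
  have hnef : ¬S₀.Adj e f := fun h => hbr h.reachable
  have hnxf : ¬S₀.Adj x f := fun h => hbr (hex.trans h.reachable)
  have hw := fweight_sup_edge hnef (hS.1.1 hf).2.2.1
  have hw' := fweight_sup_edge hnxf hxf
  have hxA : x ∩ f = A := by
    have := hS.2 _ hS'
    rw [hw, hw', hAf] at this
    exact (Finset.eq_of_subset_of_card_le hAxf (by omega)).symm
  have hS'max : IsMaxSpanningForest (wg E) (S₀ ⊔ edge x f) :=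
    ⟨hS', fun T hT => (hS.2 T hT).trans (by rw [hw, hw', hAf, hxA])⟩
  have hx1' : interDegree S₀ x A ≤ 1 := Set.ncard_le_one_iff_subsingleton.2
    (hx1.anti fun h ⟨hxh, hA⟩ => ⟨hxh, hA ▸ Finset.inter_subset_right⟩)
  exact absurd (hmin _ hS'max)
    (not_le.2 (excess_sup_edge_lt hnef hnxf (hS.1.1 hf).2.2.1 hxf hxe hAf hxA he3 hx1'))

lemma InvariantStar.ncard_adj_le {E : Finset (Finset V)} {S : SimpleGraph (Finset V)}
    (hstar : InvariantStar E S) (hS : S ≤ wg E) {e : Finset V} (he : e ∈ E) :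
    {f | S.Adj e f}.ncard ≤ 2 * (2 ^ e.card - 1) := by
  classical
  set N : Finset (Finset V) := {f | S.Adj e f}
  have hmaps : ∀ f ∈ N, e ∩ f ∈ e.powerset.erase ∅ := by
    intro f hf
    simp only [N, Finset.mem_filter, Finset.mem_univ, true_and] at hf
    simpa [Finset.nonempty_iff_ne_empty] using (hS hf).2.2.2
  have hfib : ∀ A ∈ e.powerset.erase ∅, (N.filter (e ∩ · = A)).card ≤ 2 := by
    intro A hA
    rw [Finset.mem_erase, Finset.mem_powerset] at hA
    convert hstar e he A (Finset.nonempty_iff_ne_empty.2 hA.1) hA.2 using 1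
    rw [← Set.ncard_coe_finset]
    congr 1
    ext f
    simp [N]
  have := Finset.card_le_mul_card_image_of_maps_to hmaps 2 hfib
  rw [Finset.card_erase_of_mem (Finset.empty_mem_powerset e), Finset.card_powerset,
    ← Set.ncard_coe_finset] at this
  convert this using 2
  ext f
  simp [N]

/-- Every hypergraph has a maximum-weight spanning forest of its weighted hyperedge
graph satisfying Invariant (★); consequently, in such a forest every node `e` has
degree at most `2 * (2 ^ |e| - 1)`. -/
theorem exists_maxSpanningForest_invariantStar (E : Finset (Finset V)) :
    ∃ S, IsMaxSpanningForest (wg E) S ∧ InvariantStar E S ∧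
      ∀ e ∈ E, {f : Finset V | S.Adj e f}.ncard ≤ 2 * (2 ^ e.card - 1) := by
  obtain ⟨S, hS, hmin⟩ := Set.exists_min_image {S | IsMaxSpanningForest (wg E) S} excess
    (Set.toFinite _) (exists_isMaxSpanningForest (wg E))
  have hstar := invariantStar_of_excess_le hS hmin
  exact ⟨S, hS, hstar, fun e he => hstar.ncard_adj_le hS.1.1 he⟩
end

section
/- Let H be a hypergraph whose set of hyperedges is partitioned into two sets C₁ and C₂. Let e₁ ∈ C₁ and e₂ ∈ C₂ be such that (e₁, e₂) is an edge of wg(H) of maximum weight among all edges of wg(H) with one endpoint in C₁ and the other in C₂, and let A = e₁ ∩ e₂. Then for every hyperedge e₁' ∈ C₁ with e₁ ∩ e₁' = A, the pair (e₁', e₂) is also an edge of wg(H) with one endpoint in C₁ and the other in C₂ of the same maximum weight; in particular |e₁' ∩ e₂| = |A|. -/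
/-!
Lemma 3.1(a) (Bernstein–Goodman): a hypergraph `H` is acyclic iff the weight `w(H)`
equals the weight of a maximum-weight spanning forest of the weighted hyperedge
graph `wg(H)`.

A hypergraph on a finite vertex type `V` is given by its finite set `E` of
hyperedges, each a `Finset V`.
-/

variable {V : Type*} [Fintype V] [DecidableEq V]

theorem Finset.inter_subset_inter_of_inter_eq {α : Type*} [DecidableEq α] {s t u : Finset α}
    (h : s ∩ t = s ∩ u) : s ∩ u ⊆ t ∩ u :=
  Finset.subset_inter (h ▸ Finset.inter_subset_right) Finset.inter_subset_right

theorem wg_adj_of_mem_of_mem {W : Type*} [DecidableEq W] {E C₁ C₂ : Finset (Finset W)}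
    (hpart : C₁ ∪ C₂ = E) (hdisj : Disjoint C₁ C₂) {f₁ f₂ : Finset W}
    (h₁ : f₁ ∈ C₁) (h₂ : f₂ ∈ C₂) (hmeet : (f₁ ∩ f₂).Nonempty) : (wg E).Adj f₁ f₂ :=
  ⟨hpart ▸ Finset.mem_union_left _ h₁, hpart ▸ Finset.mem_union_right _ h₂,
    fun h => Finset.disjoint_left.mp hdisj h₁ (h ▸ h₂), hmeet⟩

theorem crossing_edge_replacement_general (E C₁ C₂ : Finset (Finset V))
    (hpart : C₁ ∪ C₂ = E) (hdisj : Disjoint C₁ C₂)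
    (e₁ e₂ : Finset V) (h₂ : e₂ ∈ C₂)
    (hadj : (wg E).Adj e₁ e₂)
    (hmax : ∀ f₁ ∈ C₁, ∀ f₂ ∈ C₂, (wg E).Adj f₁ f₂ → (f₁ ∩ f₂).card ≤ (e₁ ∩ e₂).card)
    (A : Finset V) (hA : A = e₁ ∩ e₂) :
    ∀ e₁' ∈ C₁, e₁ ∩ e₁' = A →
      (wg E).Adj e₁' e₂ ∧ (e₁' ∩ e₂).card = (e₁ ∩ e₂).card ∧ (e₁' ∩ e₂).card = A.card := by
  subst hA
  intro e₁' h₁' hA'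
  have hsub : e₁ ∩ e₂ ⊆ e₁' ∩ e₂ := Finset.inter_subset_inter_of_inter_eq hA'
  have hadj' : (wg E).Adj e₁' e₂ :=
    wg_adj_of_mem_of_mem hpart hdisj h₁' h₂ (hadj.2.2.2.mono hsub)
  have heq : (e₁' ∩ e₂).card = (e₁ ∩ e₂).card :=
    le_antisymm (hmax _ h₁' _ h₂ hadj') (Finset.card_le_card hsub)
  exact ⟨hadj', heq, heq⟩

/-- If the hyperedges of `H` are partitioned into `C₁` and `C₂` and `(e₁, e₂)` is a
maximum-weight edge of `wg(H)` crossing the partition, with `A = e₁ ∩ e₂`, then for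
every `e₁' ∈ C₁` with `e₁ ∩ e₁' = A`, the pair `(e₁', e₂)` is also a crossing edge
of `wg(H)` of the same maximum weight; in particular `|e₁' ∩ e₂| = |A|`. -/
theorem crossing_edge_replacement (E C₁ C₂ : Finset (Finset V))
    (hpart : C₁ ∪ C₂ = E) (hdisj : Disjoint C₁ C₂)
    (e₁ e₂ : Finset V) (h₁ : e₁ ∈ C₁) (h₂ : e₂ ∈ C₂)
    (hadj : (wg E).Adj e₁ e₂)
    (hmax : ∀ f₁ ∈ C₁, ∀ f₂ ∈ C₂, (wg E).Adj f₁ f₂ → (f₁ ∩ f₂).card ≤ (e₁ ∩ e₂).card)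
    (A : Finset V) (hA : A = e₁ ∩ e₂) :
    ∀ e₁' ∈ C₁, e₁ ∩ e₁' = A →
      (wg E).Adj e₁' e₂ ∧ (e₁' ∩ e₂).card = (e₁ ∩ e₂).card ∧ (e₁' ∩ e₂).card = A.card :=
  crossing_edge_replacement_general E C₁ C₂ hpart hdisj e₁ e₂ h₂ hadj hmax A hA
end
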